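/- Let G be a flow graph with start vertex s, dominator tree D, and low-high order delta, and let B and R be the strongly divergent spanning trees derived from delta (with b(v) = d(v) if (d(v),v) ∈ E else b(v) = low(v); r(v) = d(v) if (d(v),v) ∈ E else r(v) = high(v)). Then for any two vertices v, w with v <_delta w, the path from s to v in B and the path from s to w in R intersect exactly in the set of common dominators of v and w, i.e., B[s,v] ∩ R[s,w] = D[s,v] ∩ D[s,w]. -/

import Mathlib

open scoped Classical

namespace Dominators

variable {V : Type*}

/-- A walk in a digraph `E` from `u` to `w`, recorded as the list of its vertices. -/
inductive Walk (E : V → V → Prop) : V → V → List V → Prop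
  | nil (v : V) : Walk E v v [v]
  | cons {u v w : V} {p : List V} (h : E u v) (hw : Walk E v w p) : Walk E u w (u :: p)

/-- `v` is reachable from `s` in the flow graph `(E, s)`. -/
def Reachable (E : V → V → Prop) (s v : V) : Prop := ∃ p, Walk E s v p

/-- `v` dominates `w` in the flow graph `(E, s)`: every walk from `s` to `w` contains `v`.
In the dominator tree `D`, `v` is an ancestor of `w` iff `v` dominates `w`. -/
def Dom (E : V → V → Prop) (s v w : V) : Prop := ∀ p, Walk E s w p → v ∈ p

/-- `v` is the immediate dominator of `w` (the parent of `w` in the dominator tree):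
a proper dominator of `w` that is dominated by every proper dominator of `w`. -/
def IsIdom (E : V → V → Prop) (s v w : V) : Prop :=
  v ≠ w ∧ Dom E s v w ∧ ∀ u, u ≠ w → Dom E s u w → Dom E s u v

/-- `z` is the nearest common ancestor of `x` and `y` in the dominator tree of `(E, s)`. -/
def IsNca (E : V → V → Prop) (s z x y : V) : Prop :=
  Dom E s z x ∧ Dom E s z y ∧ ∀ u, Dom E s u x → Dom E s u y → Dom E s u z

/-- The graph obtained from `E` by inserting the edge `(x, y)`. -/
def Ins (E : V → V → Prop) (x y : V) : V → V → Prop := fun a b => E a b ∨ (a = x ∧ b = y)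

/-- `v` is affected by the insertion of edge `(x, y)`: its immediate dominator
(parent in the dominator tree) changes. -/
def Affected (E : V → V → Prop) (s x y v : V) : Prop :=
  ∃ a b, IsIdom E s a v ∧ IsIdom (Ins E x y) s b v ∧ a ≠ b

/-- `depth` is a depth function for the dominator tree of `(E, s)`. -/
def IsDepth (E : V → V → Prop) (s : V) (depth : V → ℕ) : Prop :=
  depth s = 0 ∧ ∀ v u, Reachable E s v → v ≠ s → IsIdom E s u v → depth v = depth u + 1

/-- `δ` is a preorder of the dominator tree of `(E, s)`: it is injective on reachable
vertices, every vertex precedes (or equals) its descendants, and the descendants of every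
vertex are consecutive. -/
def IsPreorderOfD (E : V → V → Prop) (s : V) (δ : V → ℕ) : Prop :=
  (∀ u v, Reachable E s u → Reachable E s v → u ≠ v → δ u ≠ δ v) ∧
  (∀ v u, Reachable E s u → Dom E s v u → δ v ≤ δ u) ∧
  (∀ v a b, Reachable E s b → Dom E s v a → δ v ≤ δ b → δ b ≤ δ a → Dom E s v b)

/-- `δ` is a low-high order for the vertex `v` in `(E, s)`: either the edge from the
parent `d(v)` of `v` in the dominator tree is in `E`, or `v` has two entering edges
`(u, v)` and `(w, v)` with `u`, `w` reachable, `u <_δ v <_δ w`, and `w` not a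
descendant of `v` in the dominator tree. -/
def LowHighFor (E : V → V → Prop) (s : V) (δ : V → ℕ) (v : V) : Prop :=
  (∃ q, IsIdom E s q v ∧ E q v) ∨
  ∃ u w, E u v ∧ E w v ∧ Reachable E s u ∧ Reachable E s w ∧
    δ u < δ v ∧ δ v < δ w ∧ ¬ Dom E s v w

/-- `δ` is a low-high order of the flow graph `(E, s)`. -/
def IsLowHigh (E : V → V → Prop) (s : V) (δ : V → ℕ) : Prop :=
  IsPreorderOfD E s δ ∧ ∀ v, Reachable E s v → v ≠ s → LowHighFor E s δ v

/-- The edge relation of the spanning tree with parent function `par`, rooted at `s`,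
on the vertices reachable in `(E, s)`. -/
def TreeRel (E : V → V → Prop) (s : V) (par : V → V) : V → V → Prop :=
  fun a b => Reachable E s b ∧ b ≠ s ∧ par b = a

/-- `par` is (the parent function of) a spanning tree of the flow graph `(E, s)`. -/
def IsSpanningTree (E : V → V → Prop) (s : V) (par : V → V) : Prop :=
  (∀ v, Reachable E s v → v ≠ s → E (par v) v) ∧
  (∀ v, Reachable E s v → ∃ p, Walk (TreeRel E s par) s v p)

/-- The spanning trees with parent functions `b` and `r` are divergent: for every
reachable `v`, the tree paths from `s` to `v` share only the dominators of `v`. -/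
def Divergent (E : V → V → Prop) (s : V) (b r : V → V) : Prop :=
  ∀ v p q, Reachable E s v → Walk (TreeRel E s b) s v p → Walk (TreeRel E s r) s v q →
    ∀ u, u ∈ p → u ∈ q → Dom E s u v

/-!
Along the tree `B` the order `δ` strictly increases from parent to child (the parent is
`d(v)` or `low(v)`, both before `v`), so every vertex of `B[s,v]` precedes `v`. Along `R`
each parent is either a dominator of the child or a `high` vertex that comes later and is
not a descendant; by the contiguity of subtrees in a preorder, this propagates to the
invariant that every vertex of `R[s,w]` dominates `w` or comes after `w` outside its
subtree. A common vertex `u` thus satisfies `δ u ≤ δ v < δ w`, hence dominates `w`, and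
then also `v` since `δ u ≤ δ v ≤ δ w`.
-/

namespace Walk

variable {E F : V → V → Prop} {x v : V} {p : List V}

theorem head_mem (h : Walk E x v p) : x ∈ p := by
  cases h with
  | nil => exact List.mem_singleton_self _
  | cons => exact List.mem_cons_self

theorem last_mem (h : Walk E x v p) : v ∈ p := by
  induction h with
  | nil => exact List.mem_singleton_self _
  | cons _ _ ih => exact List.mem_cons_of_mem _ ih

theorem mono (hEF : ∀ a b, E a b → F a b) (h : Walk E x v p) : Walk F x v p := by
  induction h with
  | nil v => exact nil v
  | cons hab _ ih => exact cons (hEF _ _ hab) ih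

theorem exists_prefix (h : Walk E x v p) :
    ∀ u ∈ p, ∃ q, Walk E x u q ∧ ∀ z ∈ q, z ∈ p := by
  induction h with
  | nil v =>
    intro u hu
    rw [List.mem_singleton.mp hu]
    exact ⟨[v], nil v, fun z hz => hz⟩
  | @cons x _ _ _ hxy _ ih =>
    intro u hu
    rcases List.mem_cons.mp hu with rfl | hu
    · refine ⟨[u], nil u, fun z hz => ?_⟩
      rw [List.mem_singleton.mp hz]
      exact List.mem_cons_self
    · obtain ⟨q, hq, hsub⟩ := ih u hu
      exact ⟨x :: q, cons hxy hq, fun z hz => by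
        rcases List.mem_cons.mp hz with rfl | hz
        exacts [List.mem_cons_self, List.mem_cons_of_mem _ (hsub z hz)]⟩

theorem le_last {α : Type*} [Preorder α] {f : V → α} (hF : ∀ a b, E a b → f a ≤ f b)
    (h : Walk E x v p) : ∀ u ∈ p, f u ≤ f v := by
  induction h with
  | nil v =>
    intro u hu
    rw [List.mem_singleton.mp hu]
  | cons hab hw ih =>
    intro u hu
    rcases List.mem_cons.mp hu with rfl | hu
    · exact (hF _ _ hab).trans (ih _ hw.head_mem)
    · exact ih u hu

end Walk

section

variable {E : V → V → Prop} {s : V}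

theorem Dom.refl (w : V) : Dom E s w w := fun _ hp => hp.last_mem

theorem Dom.trans {a b c : V} (hab : Dom E s a b) (hbc : Dom E s b c) : Dom E s a c := by
  intro p hp
  obtain ⟨q, hq, hsub⟩ := hp.exists_prefix b (hbc p hp)
  exact hsub a (hab q hq)

theorem Dom.reachable {u v : V} (h : Dom E s u v) (hv : Reachable E s v) : Reachable E s u := by
  obtain ⟨p, hp⟩ := hv
  obtain ⟨q, hq, -⟩ := hp.exists_prefix u (h p hp)
  exact ⟨q, hq⟩

theorem treeRel_edge {par : V → V} (hpar : ∀ v, Reachable E s v → v ≠ s → E (par v) v)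
    {a c : V} (h : TreeRel E s par a c) : E a c := by
  obtain ⟨hc, hcs, rfl⟩ := h
  exact hpar c hc hcs

variable {δ : V → ℕ}

namespace IsPreorderOfD

theorem dom_of_le_of_le (hδ : IsPreorderOfD E s δ) {u a b : V} (hb : Reachable E s b)
    (hua : Dom E s u a) (hub : δ u ≤ δ b) (hba : δ b ≤ δ a) : Dom E s u b :=
  hδ.2.2 u a b hb hua hub hba

theorem lt_of_idom (hδ : IsPreorderOfD E s δ) {x y : V} (hy : Reachable E s y)
    (h : IsIdom E s x y) : δ x < δ y :=
  (hδ.2.1 x y hy h.2.1).lt_of_ne (hδ.1 x y (h.2.1.reachable hy) hy h.1)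

end IsPreorderOfD

def DomOrFollows (E : V → V → Prop) (s : V) (δ : V → ℕ) (u w : V) : Prop :=
  Dom E s u w ∨ (δ w < δ u ∧ ¬ Dom E s w u)

namespace DomOrFollows

theorem of_dom (hδ : IsPreorderOfD E s δ) {x y w : V} (hw : Reachable E s w)
    (h : DomOrFollows E s δ y w) (hxy : Dom E s x y) : DomOrFollows E s δ x w := by
  rcases h with hyw | ⟨hwy, hnwy⟩
  · exact Or.inl (hxy.trans hyw)
  · by_cases hxw : δ x ≤ δ w
    · exact Or.inl (hδ.dom_of_le_of_le hw hxy hxw hwy.le)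
    · exact Or.inr ⟨lt_of_not_ge hxw, fun hwx => hnwy (hwx.trans hxy)⟩

theorem of_follows (hδ : IsPreorderOfD E s δ) {x y w : V} (hx : Reachable E s x)
    (hy : Reachable E s y) (h : DomOrFollows E s δ y w) (hyx : δ y < δ x)
    (hnyx : ¬ Dom E s y x) : DomOrFollows E s δ x w := by
  rcases h with hyw | ⟨hwy, hnwy⟩
  · by_cases hxw : δ x ≤ δ w
    · exact absurd (hδ.dom_of_le_of_le hx hyw hyx.le hxw) hnyx
    · exact Or.inr ⟨lt_of_not_ge hxw, fun hwx => hnyx (hyw.trans hwx)⟩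
  · exact Or.inr ⟨hwy.trans hyx, fun hwx => hnwy (hδ.dom_of_le_of_le hy hwx hwy.le hyx.le)⟩

end DomOrFollows

theorem Walk.domOrFollows {F : V → V → Prop} (hδ : IsPreorderOfD E s δ)
    (hF : ∀ a c, F a c → Dom E s a c ∨
      (Reachable E s a ∧ Reachable E s c ∧ δ c < δ a ∧ ¬ Dom E s c a))
    {x w : V} {q : List V} (h : Walk F x w q) (hw : Reachable E s w) :
    ∀ u ∈ q, DomOrFollows E s δ u w := by
  induction h with
  | nil w =>
    intro u hu
    rw [List.mem_singleton.mp hu]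
    exact Or.inl (Dom.refl w)
  | cons hac hcw ih =>
    intro u hu
    rcases List.mem_cons.mp hu with rfl | hu
    · have hc := ih hw _ hcw.head_mem
      rcases hF _ _ hac with hdom | ⟨hu, hc', hlt, hndom⟩
      · exact hc.of_dom hδ hw hdom
      · exact hc.of_follows hδ hu hc' hlt hndom
    · exact ih hw u hu

theorem treeRel_low_lt {d low b : V → V}
    (hd : ∀ v, Reachable E s v → v ≠ s → IsIdom E s (d v) v)
    (hδ : IsPreorderOfD E s δ)
    (hlow : ∀ v, Reachable E s v → v ≠ s → ¬ E (d v) v → δ (low v) < δ v)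
    (hb : ∀ v, b v = if E (d v) v then d v else low v) {a c : V} (h : TreeRel E s b a c) :
    δ a < δ c := by
  obtain ⟨hc, hcs, rfl⟩ := h
  rw [hb]
  split_ifs with hE
  exacts [hδ.lt_of_idom hc (hd c hc hcs), hlow c hc hcs hE]

theorem treeRel_high_dom_or_follows {d high r : V → V}
    (hd : ∀ v, Reachable E s v → v ≠ s → IsIdom E s (d v) v)
    (hhigh : ∀ v, Reachable E s v → v ≠ s → ¬ E (d v) v →
      Reachable E s (high v) ∧ δ v < δ (high v) ∧ ¬ Dom E s v (high v))
    (hr : ∀ v, r v = if E (d v) v then d v else high v) {a c : V} (h : TreeRel E s r a c) :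
    Dom E s a c ∨ (Reachable E s a ∧ Reachable E s c ∧ δ c < δ a ∧ ¬ Dom E s c a) := by
  obtain ⟨hc, hcs, rfl⟩ := h
  rw [hr]
  split_ifs with hE
  · exact Or.inl (hd c hc hcs).2.1
  · obtain ⟨hh, hlt, hndom⟩ := hhigh c hc hcs hE
    exact Or.inr ⟨hh, hc, hlt, hndom⟩

end

theorem stmt14_general (E : V → V → Prop) (s : V) (d low high b r : V → V) (δ : V → ℕ)
    (hd : ∀ v, Reachable E s v → v ≠ s → IsIdom E s (d v) v)
    (hδ : IsPreorderOfD E s δ)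
    (hlow : ∀ v, Reachable E s v → v ≠ s → ¬ E (d v) v →
      E (low v) v ∧ low v ≠ d v ∧ Reachable E s (low v) ∧ δ (low v) < δ v)
    (hhigh : ∀ v, Reachable E s v → v ≠ s → ¬ E (d v) v →
      E (high v) v ∧ Reachable E s (high v) ∧ δ v < δ (high v) ∧ ¬ Dom E s v (high v))
    (hb : ∀ v, b v = if E (d v) v then d v else low v)
    (hr : ∀ v, r v = if E (d v) v then d v else high v) :
    ∀ v w, Reachable E s v → Reachable E s w → δ v < δ w →
      ∀ p q, Walk (TreeRel E s b) s v p → Walk (TreeRel E s r) s w q →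
        ∀ u, (u ∈ p ∧ u ∈ q) ↔ (Dom E s u v ∧ Dom E s u w) := by
  intro v w hv hw hvw p q hp hq u
  have hB_mono : ∀ a c, TreeRel E s b a c → δ a ≤ δ c := fun _ _ h =>
    (treeRel_low_lt hd hδ (fun x hx hxs hE => (hlow x hx hxs hE).2.2.2) hb h).le
  have hR_step := fun a c (h : TreeRel E s r a c) =>
    treeRel_high_dom_or_follows hd (fun x hx hxs hE => (hhigh x hx hxs hE).2) hr h
  constructor
  · rintro ⟨hup, huq⟩
    have huv : δ u ≤ δ v := hp.le_last hB_mono u hup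
    have huw : Dom E s u w :=
      (hq.domOrFollows hδ hR_step hw u huq).resolve_right fun h => by omega
    exact ⟨hδ.dom_of_le_of_le hv huw huv hvw.le, huw⟩
  · have hbE : ∀ x, Reachable E s x → x ≠ s → E (b x) x := fun x hx hxs => by
      rw [hb]; split_ifs with hE; exacts [hE, (hlow x hx hxs hE).1]
    have hrE : ∀ x, Reachable E s x → x ≠ s → E (r x) x := fun x hx hxs => by
      rw [hr]; split_ifs with hE; exacts [hE, (hhigh x hx hxs hE).1]
    rintro ⟨huv, huw⟩
    exact ⟨huv p (hp.mono fun _ _ => treeRel_edge hbE),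
      huw q (hq.mono fun _ _ => treeRel_edge hrE)⟩

/-- Let `δ` be a low-high order of `(G, s)` (with witnesses `low`,
`high`) and let `B`, `R` be the spanning trees with parent functions
`b v = d v` if `(d v, v) ∈ E` else `low v`, and `r v = d v` if `(d v, v) ∈ E` else
`high v`. Then for any two vertices `v`, `w` with `δ v < δ w`, the path from `s` to `v`
in `B` and the path from `s` to `w` in `R` intersect exactly in the common dominators
of `v` and `w`. -/
theorem stmt14 (E : V → V → Prop) (s : V) (d low high b r : V → V) (δ : V → ℕ)
    (hd : ∀ v, Reachable E s v → v ≠ s → IsIdom E s (d v) v)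
    (hδ : IsPreorderOfD E s δ)
    (hlow : ∀ v, Reachable E s v → v ≠ s → ¬ E (d v) v →
      E (low v) v ∧ low v ≠ d v ∧ Reachable E s (low v) ∧ δ (low v) < δ v)
    (hhigh : ∀ v, Reachable E s v → v ≠ s → ¬ E (d v) v →
      E (high v) v ∧ Reachable E s (high v) ∧ δ v < δ (high v) ∧ ¬ Dom E s v (high v))
    (hb : ∀ v, b v = if E (d v) v then d v else low v)
    (hr : ∀ v, r v = if E (d v) v then d v else high v)
    (hB : IsSpanningTree E s b) (hR : IsSpanningTree E s r) :
    ∀ v w, Reachable E s v → Reachable E s w → δ v < δ w →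
      ∀ p q, Walk (TreeRel E s b) s v p → Walk (TreeRel E s r) s w q →
        ∀ u, (u ∈ p ∧ u ∈ q) ↔ (Dom E s u v ∧ Dom E s u w) :=
  stmt14_general E s d low high b r δ hd hδ hlow hhigh hb hr

end Dominators
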